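/- Assume p_{i+} > 0 for every row i. Let t be an integer with 1 ≤ t < c and S_t(p_{+·}) ≠ 1. If the table is independent, i.e., p i j = p_{i+} · p_{+j} for all i and j, then λ^{K(t)}_{Y|X} = 0. -/

import Mathlib

/-- `Smax t q` : the maximum, over subsets `T` of the index type with `T.card = t`,
of `∑ j ∈ T, q j` (i.e. the sum of the `t` largest entries of `q`). -/
noncomputable def Smax {n : ℕ} (t : ℕ) (q : Fin n → ℝ) : ℝ :=
  sSup ((fun T : Finset (Fin n) => ∑ j ∈ T, q j) '' {T : Finset (Fin n) | T.card = t})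

/-- Row marginals `p_{i+}`. -/
noncomputable def rowMarg {r c : ℕ} (p : Fin r → Fin c → ℝ) : Fin r → ℝ :=
  fun i => ∑ j, p i j

/-- Column marginals `p_{+j}`. -/
noncomputable def colMarg {r c : ℕ} (p : Fin r → Fin c → ℝ) : Fin c → ℝ :=
  fun j => ∑ i, p i j

/-- The measure `λ^{(t)}_{Y|X}` based on multi-categorical proportional reduction in error. -/
noncomputable def lambdaT {r c : ℕ} (t : ℕ) (p : Fin r → Fin c → ℝ) : ℝ :=
  (∑ i, Smax t (p i) - Smax t (colMarg p)) / (1 - Smax t (colMarg p))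

/-- The alternative measure `λ^{K(t)}_{Y|X}`. -/
noncomputable def lambdaKT {r c : ℕ} (t : ℕ) (p : Fin r → Fin c → ℝ) : ℝ :=
  (Real.sqrt (∑ i, (Smax t (p i)) ^ 2 / rowMarg p i) - Smax t (colMarg p)) /
    (1 - Smax t (colMarg p))

theorem Smax_nonneg {n : ℕ} (t : ℕ) {q : Fin n → ℝ} (hq : ∀ j, 0 ≤ q j) : 0 ≤ Smax t q :=
  Real.sSup_nonneg <| by
    rintro _ ⟨T, -, rfl⟩
    exact Finset.sum_nonneg fun j _ => hq j

theorem Smax_const_mul {n : ℕ} (t : ℕ) (q : Fin n → ℝ) {a : ℝ} (ha : 0 ≤ a) :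
    Smax t (fun j => a * q j) = a * Smax t q := by
  have hcomp : (fun T : Finset (Fin n) => ∑ j ∈ T, a * q j) =
      (a • ·) ∘ fun T => ∑ j ∈ T, q j := by
    ext T
    simp [Finset.mul_sum]
  rw [Smax, hcomp, Set.image_comp, Set.image_smul, Real.sSup_smul_of_nonneg ha, smul_eq_mul, Smax]

theorem sum_sq_div_eq_sum_mul_sq {ι : Type*} (s : Finset ι) (w : ι → ℝ) (hw : ∀ i ∈ s, w i ≠ 0)
    (x : ℝ) : ∑ i ∈ s, (w i * x) ^ 2 / w i = (∑ i ∈ s, w i) * x ^ 2 := by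
  rw [Finset.sum_mul]
  refine Finset.sum_congr rfl fun i hi => ?_
  field_simp [hw i hi]

theorem lambdaKT_eq_zero_of_indep_general
    (r c : ℕ)
    (p : Fin r → Fin c → ℝ) (hp : ∀ i j, 0 ≤ p i j)
    (hsum : ∑ i, ∑ j, p i j = 1)
    (hpos : ∀ i, 0 < rowMarg p i)
    (t : ℕ)
    (hind : ∀ i j, p i j = rowMarg p i * colMarg p j) :
    lambdaKT t p = 0 := by
  have hS : 0 ≤ Smax t (colMarg p) := Smax_nonneg t fun j => Finset.sum_nonneg fun i _ => hp i j
  have hrow : ∀ i, Smax t (p i) = rowMarg p i * Smax t (colMarg p) := fun i => by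
    rw [← Smax_const_mul t _ (hpos i).le]
    exact congrArg _ (funext (hind i))
  have hrad : ∑ i, Smax t (p i) ^ 2 / rowMarg p i = Smax t (colMarg p) ^ 2 := by
    simp_rw [hrow]
    rw [sum_sq_div_eq_sum_mul_sq _ _ fun i _ => (hpos i).ne']
    simp [rowMarg, hsum]
  rw [lambdaKT, hrad, Real.sqrt_sq hS, sub_self, zero_div]

/-- independence implies `λ^{K(t)}_{Y|X} = 0`. -/
theorem lambdaKT_eq_zero_of_indep
    (r c : ℕ) (hr : 2 ≤ r) (hc : 2 ≤ c)
    (p : Fin r → Fin c → ℝ) (hp : ∀ i j, 0 ≤ p i j)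
    (hsum : ∑ i, ∑ j, p i j = 1)
    (hpos : ∀ i, 0 < rowMarg p i)
    (t : ℕ) (ht1 : 1 ≤ t) (htc : t < c)
    (hS : Smax t (colMarg p) ≠ 1)
    (hind : ∀ i j, p i j = rowMarg p i * colMarg p j) :
    lambdaKT t p = 0 :=
  lambdaKT_eq_zero_of_indep_general r c p hp hsum hpos t hind
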